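/- Equivalence of AccMut and split-stream execution (Theorem 1): for every fuel bound n, every finite set I ⊆ M, every mutant ID i ∈ I, and every state s, accRun n I s i = ssRun n I s i; that is, AccMut and split-stream execution record exactly the same final state for every mutant and hence the same sequence of save(s, i) invocations. -/

import Mathlib

/-!
Since `i` always belongs to its own class `K = {j ∈ I : step j s = step i s}`, the
representative `rep K` takes the same step as `i`, so the AccMut run of `i` just performs the
standard steps of `i`. The split-stream run of `i` does the same as long as `i ∈ M`, because the
ID set it carries never influences the state. Induction on the fuel then identifies the two runs.
-/

/-- A variant at a location: a code block together with the set of mutant IDs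
for which this variant is enabled. -/
structure Variant (C ID : Type) where
  code : C
  I : Finset ID
deriving DecidableEq

/-- A mutation model: a finite set `M` of all mutant IDs and a mutation procedure `p`
assigning to each location a finite set of variants, such that ID sets of distinct
variants at a location are pairwise disjoint and their union is `M`. -/
structure MutModel (L C ID : Type) [DecidableEq C] [DecidableEq ID] where
  M : Finset ID
  p : L → Finset (Variant C ID)
  subset_M : ∀ l : L, ∀ v ∈ p l, v.I ⊆ M
  disj : ∀ l : L, ∀ v ∈ p l, ∀ w ∈ p l, v ≠ w → Disjoint v.I w.I
  cover : ∀ l : L, (p l).biUnion (fun v => v.I) = M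

section Runs

variable {L C ID S : Type} [DecidableEq C] [DecidableEq ID] [DecidableEq S]

/-- The standard step of mutant `i` at state `s`: if `φ s = some l`, execute the
code of the unique variant in `p l` enabled for `i`; at a terminated state
(`φ s = none`) the state is left unchanged. -/
noncomputable def step (m : MutModel L C ID) (φ : S → Option L) (execute : S → C → S)
    (i : ID) (s : S) : S :=
  match φ s with
  | none => s
  | some l => if h : ∃ v ∈ m.p l, i ∈ v.I then execute s h.choose.code else s

/-- The standard mutation-analysis run of mutant `i` for `n` steps. -/
noncomputable def stdRun (m : MutModel L C ID) (φ : S → Option L) (execute : S → C → S) :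
    ℕ → ID → S → S
  | 0, _, s => s
  | n + 1, i, s =>
    match φ s with
    | none => s
    | some _ => stdRun m φ execute n i (step m φ execute i s)

/-- The AccMut run: a process representing the mutant IDs `I` advances, for the
mutant `i`, by clustering `I` into the equivalence class
`K = {j ∈ I : step j s = step i s}` of `i` modulo the state `s` and applying the
change of an arbitrary representative `rep K` of the class. -/
noncomputable def accRun (m : MutModel L C ID) (φ : S → Option L) (execute : S → C → S)
    (rep : Finset ID → ID) : ℕ → Finset ID → S → ID → S
  | 0, _, s, _ => s
  | n + 1, I, s, i =>
    match φ s with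
    | none => s
    | some _ =>
      accRun m φ execute rep n
        (I.filter fun j => step m φ execute j s = step m φ execute i s)
        (step m φ execute
          (rep (I.filter fun j => step m φ execute j s = step m φ execute i s)) s) i

/-- The split-stream run: the process splits into one child per enabled variant;
the child containing mutant `i` represents `I ∩ v.I` for the unique variant `v`
at location `φ s` with `i ∈ v.I`, and its state advances by executing `v.code`. -/
noncomputable def ssRun (m : MutModel L C ID) (φ : S → Option L) (execute : S → C → S) :
    ℕ → Finset ID → S → ID → S
  | 0, _, s, _ => s
  | n + 1, I, s, i =>
    match φ s with
    | none => s
    | some l =>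
      if h : ∃ v ∈ m.p l, i ∈ v.I then
        ssRun m φ execute n (I ∩ h.choose.I) (execute s h.choose.code) i
      else s

section Equivalence

variable (m : MutModel L C ID) (φ : S → Option L) (execute : S → C → S)

theorem MutModel.exists_variant_mem {i : ID} (hi : i ∈ m.M) (l : L) : ∃ v ∈ m.p l, i ∈ v.I := by
  rw [← m.cover l] at hi
  exact Finset.mem_biUnion.1 hi

omit [DecidableEq S] in
theorem step_of_exists_variant {s : S} {l : L} (hs : φ s = some l) {i : ID}
    (h : ∃ v ∈ m.p l, i ∈ v.I) : step m φ execute i s = execute s h.choose.code := by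
  rw [step, hs]
  exact dif_pos h

omit [DecidableEq S] in
theorem ssRun_succ_of_exists_variant {n : ℕ} {I : Finset ID} {s : S} {l : L} (hs : φ s = some l)
    {i : ID} (h : ∃ v ∈ m.p l, i ∈ v.I) :
    ssRun m φ execute (n + 1) I s i =
      ssRun m φ execute n (I ∩ h.choose.I) (step m φ execute i s) i := by
  rw [step_of_exists_variant m φ execute hs h, ssRun, hs]
  exact dif_pos h

omit [DecidableEq S] in
theorem ssRun_congr_ids (n : ℕ) (I J : Finset ID) (s : S) (i : ID) :
    ssRun m φ execute n I s i = ssRun m φ execute n J s i := by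
  induction n generalizing I J s with
  | zero => rfl
  | succ n ih =>
    cases hs : φ s with
    | none => simp only [ssRun, hs]
    | some l =>
      by_cases h : ∃ v ∈ m.p l, i ∈ v.I
      · rw [ssRun_succ_of_exists_variant m φ execute hs h,
          ssRun_succ_of_exists_variant m φ execute hs h, ih]
      · simp only [ssRun, hs, dif_neg h]

theorem accRun_succ_of_mem (rep : Finset ID → ID) (hrep : ∀ K : Finset ID, K.Nonempty → rep K ∈ K)
    {n : ℕ} {I : Finset ID} {s : S} {l : L} (hs : φ s = some l) {i : ID} (hi : i ∈ I) :
    accRun m φ execute rep (n + 1) I s i =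
      accRun m φ execute rep n (I.filter fun j => step m φ execute j s = step m φ execute i s)
        (step m φ execute i s) i := by
  have hiK : i ∈ I.filter fun j => step m φ execute j s = step m φ execute i s :=
    Finset.mem_filter.2 ⟨hi, rfl⟩
  rw [accRun, hs, (Finset.mem_filter.1 (hrep _ ⟨i, hiK⟩)).2]

end Equivalence

/-- Equivalence of AccMut and split-stream execution (Theorem 1): for every fuel
bound `n`, every `I ⊆ M`, every `i ∈ I` and every state `s`, the AccMut run and
the split-stream run record the same final state for mutant `i`. -/
theorem stmt9 (m : MutModel L C ID) (φ : S → Option L) (execute : S → C → S)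
    (rep : Finset ID → ID) (hrep : ∀ K : Finset ID, K.Nonempty → rep K ∈ K) :
    ∀ (n : ℕ) (I : Finset ID), I ⊆ m.M → ∀ i ∈ I, ∀ s : S,
      accRun m φ execute rep n I s i = ssRun m φ execute n I s i := by
  intro n
  induction n with
  | zero => intro _ _ _ _ _; rfl
  | succ n ih =>
    intro I hIM i hi s
    cases hs : φ s with
    | none => simp only [accRun, ssRun, hs]
    | some l =>
      have h := m.exists_variant_mem (hIM hi) l
      rw [accRun_succ_of_mem m φ execute rep hrep hs hi,
        ssRun_succ_of_exists_variant m φ execute hs h]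
      refine (ih _ ?_ i ?_ _).trans (ssRun_congr_ids m φ execute n _ _ _ i)
      · exact (Finset.filter_subset _ _).trans hIM
      · exact Finset.mem_filter.2 ⟨hi, rfl⟩

end Runs
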